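/- arXiv:0810.4530 — 2 statements merged into one kernel-verified Lean document; each statement's English description precedes it below -/
import Mathlib

section
/- The linear map φ on the Lie algebra c_{1,0}(8) = (ℝ^8, μ) with μ(e_1,e_i)=e_{i+1} (i=2,…,7), μ(e_2,e_3)=e_6, μ(e_2,e_4)=e_7, μ(e_2,e_5)=e_8, given by φ(e_1)=e_1 and φ(e_i)=(i+1)e_i for 2 ≤ i ≤ 8, is a derivation of this Lie algebra, with eigenvalues 1, 3, 4, 5, 6, 7, 8, 9. -/
noncomputable section

def e (k : ℕ) : Fin 8 → ℝ := fun m => if (m : ℕ) = k then 1 else 0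

/-- Structure constants of `c_{1,0}(8)` for `i < j` (0-based indices):
`μ(e₁,e_i) = e_{i+1}` for `i = 2,…,7`, `μ(e₂,e₃) = e₆`, `μ(e₂,e₄) = e₇`,
`μ(e₂,e₅) = e₈`. -/
def cplus (i j : ℕ) : Fin 8 → ℝ :=
  if i = 0 ∧ 1 ≤ j ∧ j ≤ 6 then e (j + 1)
  else if i = 1 ∧ j = 2 then e 5
  else if i = 1 ∧ j = 3 then e 6
  else if i = 1 ∧ j = 4 then e 7
  else 0

def cst (i j : ℕ) : Fin 8 → ℝ :=
  if i < j then cplus i j else if j < i then -cplus j i else 0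

/-- The bracket of `c_{1,0}(8)`. -/
def mu (x y : Fin 8 → ℝ) : Fin 8 → ℝ :=
  fun k => ∑ i : Fin 8, ∑ j : Fin 8, x i * y j * cst (i : ℕ) (j : ℕ) k

/-- The eigenvalue `d k` of `φ` on the basis vector `e k` (0-based): `φ(e₁) = e₁`,
`φ(e_i) = (i+1)e_i` for `i ≥ 2`; eigenvalues `1, 3, 4, 5, 6, 7, 8, 9`. -/
def d (k : ℕ) : ℝ := if k = 0 then 1 else (k : ℝ) + 2

/-- The diagonal map `φ`. -/
def phi (x : Fin 8 → ℝ) : Fin 8 → ℝ := fun k => d (k : ℕ) * x k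

set_option maxHeartbeats 4000000 in
lemma key (i j k : Fin 8) :
    d (k : ℕ) * cst (i : ℕ) (j : ℕ) k = (d (i : ℕ) + d (j : ℕ)) * cst (i : ℕ) (j : ℕ) k := by
  fin_cases i <;> fin_cases j <;> fin_cases k <;> norm_num [cst, cplus, e, d]

/-- `φ` is a derivation of `c_{1,0}(8)` with eigenvalues `1, 3, 4, 5, 6, 7, 8, 9`. -/
theorem stmt12 :
    (∀ x y : Fin 8 → ℝ, phi (mu x y) = mu (phi x) y + mu x (phi y)) ∧
    (∀ k : Fin 8, phi (e (k : ℕ)) = d (k : ℕ) • e (k : ℕ)) ∧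
    (d 0 = 1 ∧ d 1 = 3 ∧ d 2 = 4 ∧ d 3 = 5 ∧ d 4 = 6 ∧ d 5 = 7 ∧ d 6 = 8 ∧ d 7 = 9) := by
  refine ⟨?_, ?_, ?_⟩
  · intro x y
    funext k
    simp only [phi, mu, Pi.add_apply, Finset.mul_sum, ← Finset.sum_add_distrib]
    refine Finset.sum_congr rfl fun i _ => Finset.sum_congr rfl fun j _ => ?_
    linear_combination (x i * y j) * key i j k
  · intro k
    funext m
    by_cases h : (m : ℕ) = (k : ℕ) <;> simp [phi, e, h]
  · norm_num [d]

end
end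

section
/- Let F ⊂ ℝ^8 be the set of 12 vectors {(−1,−1,1,0,0,0,0,0), (−1,0,−1,1,0,0,0,0), (−1,0,0,−1,1,0,0,0), (−1,0,0,0,−1,1,0,0), (−1,0,0,0,0,−1,1,0), (−1,0,0,0,0,0,−1,1), (0,0,−1,−1,0,0,1,0), (0,0,−1,0,−1,0,0,1), (0,−1,−1,0,1,0,0,0), (0,−1,0,−1,0,1,0,0), (0,−1,0,0,−1,0,1,0), (0,−1,0,0,0,−1,0,1)}, let Y ∈ ℝ^{8×12} have these as columns and U = Y^T Y. Then the system U v = [1]_{12} has a solution v ∈ ℝ^{12} with all coordinates strictly positive. -/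
set_option maxHeartbeats 1000000

noncomputable section

/-- The matrix `Y` whose columns are the 12 root vectors of `g_α(8)`, `α ≠ -2,-1,0`. -/
def Y : Matrix (Fin 8) (Fin 12) ℝ :=
  !![-1,-1,-1,-1,-1,-1, 0, 0, 0, 0, 0, 0;
     -1, 0, 0, 0, 0, 0, 0, 0,-1,-1,-1,-1;
      1,-1, 0, 0, 0, 0,-1,-1,-1, 0, 0, 0;
      0, 1,-1, 0, 0, 0,-1, 0, 0,-1, 0, 0;
      0, 0, 1,-1, 0, 0, 0,-1, 1, 0,-1, 0;
      0, 0, 0, 1,-1, 0, 0, 0, 0, 1, 0,-1;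
      0, 0, 0, 0, 1,-1, 1, 0, 0, 0, 1, 0;
      0, 0, 0, 0, 0, 1, 0, 1, 0, 0, 0, 1]

/-- `U = YᵀY`. -/
def U : Matrix (Fin 12) (Fin 12) ℝ := Y.transpose * Y

/-- The system `U v = [1]₁₂` has a solution with all coordinates strictly positive. -/
theorem stmt16 :
    ∃ v : Fin 12 → ℝ, (∀ i, 0 < v i) ∧ U.mulVec v = (fun _ => 1) := by
  use ![3/17, 4/17, 1/17, 2/17, 1/17, 3/17, 5/17, 1/17, 1/17, 3/17, 1/17, 3/17]
  constructor
  · intro i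
    fin_cases i <;> norm_num
  · funext i
    fin_cases i <;>
      norm_num [U, Y, Matrix.mulVec, dotProduct, Matrix.mul_apply,
        Fin.sum_univ_succ, Matrix.cons_val_succ', Matrix.cons_val_zero]

end
end
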